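/- There is an absolute constant C > 0 with the following property. Let N be a squarefree positive integer, ℓ a positive divisor of N, δ ∈ (0,1], L > 0, and let z = x + iy ∈ ℍ satisfy Im(σ·z) ≤ y for all σ ∈ A₀(N). Put g = (√y, x/√y; 0, 1/√y) ∈ SL₂(ℝ), so that g·i = z. Then the set R(ℓ;g)⁰ ∩ Ψ(δ,L) is finite with cardinality at most C·(1 + ℓ^{1/2}·L + (ℓ/(N·y))·L²)·(1 + ℓ·y·δ^{1/2}·L). -/

import Mathlib

/-!
Conjugating back by `g`, an element of `R(ℓ;g)⁰` is `γ = g⁻¹ Γ g` with `Γ = (a, b/ℓ; c, -a)`,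
`c = kN/ℓ`, and then `γ = (a - cx, (2ax + b/ℓ - cx²)/y; cy, cx - a)`. Since
`2P(γ) ≥ γ₀₀² + γ₁₀² = |cz - a|²`, the point `cz - a` of the lattice `ℤ (N/ℓ) z + ℤ` lies in the
disc of radius `√2 L`; since `P(γ) + det γ = (γ₀₁ - γ₁₀)² / 2` for trace-zero `γ`, for fixed
`(k, a)` the integer `b` ranges over an interval of length `4 ℓ y √δ L`.

The lattice has covolume `Ny/ℓ`, and the maximality of `Im z` gives it minimum `≥ ℓ^{-1/2}`:
writing `(Nk, ℓa) = h (C, D)` with `C, D` coprime, squarefreeness of `N` provides an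
Atkin–Lehner operator with bottom row `√Q (C, D)` where `ℓ` and `Q` both divide `h`, so
`|k (N/ℓ) z + a|² = (h/ℓ)² |Cz + D|² ≥ h² / (ℓ² Q) ≥ 1/ℓ`. A disc of radius `R` contains
`O(1 + R/r + R²/V)` points of a planar lattice of minimum `r` and covolume `V`: count the
lines parallel to a primitive vector in the disc, and the points on each line.
-/

open MeasureTheory Real Matrix Set

noncomputable section

/-- 2×2 real matrices. -/
abbrev M2 := Matrix (Fin 2) (Fin 2) ℝ

/-- The lattice R(ℓ) = { (a, b; c, d) : a, d ∈ ℤ, b ∈ (1/ℓ)ℤ, c ∈ (N/ℓ)ℤ }. -/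

def Rlat (N ℓ : ℕ) : Set M2 :=
  {γ | (∃ n : ℤ, γ 0 0 = (n : ℝ)) ∧ (∃ n : ℤ, γ 0 1 = (n : ℝ) / ℓ) ∧
       (∃ n : ℤ, γ 1 0 = (n : ℝ) * N / ℓ) ∧ (∃ n : ℤ, γ 1 1 = (n : ℝ))}

/-- The conjugated lattice R(ℓ;g) = g⁻¹ · R(ℓ) · g. -/

def Rconj (N ℓ : ℕ) (g : M2) : Set M2 := {γ | g * γ * g⁻¹ ∈ Rlat N ℓ}

/-- P(γ): half the sum of the squares of the four entries of γ. -/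

def Pfun (γ : M2) : ℝ := ((γ 0 0) ^ 2 + (γ 0 1) ^ 2 + (γ 1 0) ^ 2 + (γ 1 1) ^ 2) / 2

/-- Ω(δ,L) = {γ : P(γ) ≤ L² and P(γ) − det γ ≤ 2δL²}. -/

def OmegaSet (δ L : ℝ) : Set M2 := {γ | Pfun γ ≤ L ^ 2 ∧ Pfun γ - γ.det ≤ 2 * δ * L ^ 2}

/-- Ω⋆(δ,L): nonzero elements of Ω(δ,L). -/

def OmegaStar (δ L : ℝ) : Set M2 := {γ | γ ∈ OmegaSet δ L ∧ γ ≠ 0}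

/-- Ψ(δ,L) = {γ : P(γ) ≤ L² and P(γ) + det γ ≤ 2δL²}. -/

def PsiSet (δ L : ℝ) : Set M2 := {γ | Pfun γ ≤ L ^ 2 ∧ Pfun γ + γ.det ≤ 2 * δ * L ^ 2}

/-- Ψ⋆(δ,L): nonzero elements of Ψ(δ,L). -/

def PsiStar (δ L : ℝ) : Set M2 := {γ | γ ∈ PsiSet δ L ∧ γ ≠ 0}

/-- Möbius action of a 2×2 real matrix on a complex number. -/

def moebius (m : M2) (z : ℂ) : ℂ :=
  ((m 0 0 : ℂ) * z + (m 0 1 : ℂ)) / ((m 1 0 : ℂ) * z + (m 1 1 : ℂ))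

/-- A₀(N): determinant-one matrices of the form Q^{−1/2}·(Qa, b; Nc, Qd)
    with Q a positive divisor of N and a,b,c,d ∈ ℤ. -/

def AtkinLehner (N : ℕ) : Set M2 :=
  {σ | σ.det = 1 ∧ ∃ (Q : ℕ) (a b c d : ℤ), 0 < Q ∧ Q ∣ N ∧
     σ = (Real.sqrt Q)⁻¹ • !![(Q : ℝ) * a, (b : ℝ); (N : ℝ) * c, (Q : ℝ) * d]}

/-- H(g) = sup_{σ ∈ A₀(N)} Im(σ·(g·i)). -/

def Hgt (N : ℕ) (g : M2) : ℝ :=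
  sSup ((fun σ => (moebius σ (moebius g Complex.I)).im) '' AtkinLehner N)

theorem finite_and_ncard_le_of_abs_sub_le {S : Set ℤ} {M : ℝ} (hM : 0 ≤ M)
    (h : ∀ a ∈ S, ∀ b ∈ S, |(a : ℝ) - b| ≤ M) : S.Finite ∧ (S.ncard : ℝ) ≤ 2 * M + 1 := by
  rcases S.eq_empty_or_nonempty with rfl | ⟨a₀, ha₀⟩
  · simp only [finite_empty, ncard_empty, Nat.cast_zero, true_and]
    linarith
  have hsub : S ⊆ Icc (a₀ - ⌊M⌋) (a₀ + ⌊M⌋) := fun b hb ↦ by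
    have : |b - a₀| ≤ ⌊M⌋ := Int.le_floor.2 (by push_cast; exact h b hb a₀ ha₀)
    exact ⟨by linarith [neg_abs_le (b - a₀)], by linarith [le_abs_self (b - a₀)]⟩
  refine ⟨(finite_Icc _ _).subset hsub, ?_⟩
  have hfloor : 0 ≤ ⌊M⌋ := Int.floor_nonneg.2 hM
  calc (S.ncard : ℝ) ≤ (Icc (a₀ - ⌊M⌋) (a₀ + ⌊M⌋)).ncard := by
        exact_mod_cast ncard_le_ncard hsub (finite_Icc _ _)
    _ = 2 * ⌊M⌋ + 1 := by
        rw [← Finset.coe_Icc, ncard_coe_finset, Int.card_Icc,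
          show a₀ + ⌊M⌋ + 1 - (a₀ - ⌊M⌋) = 2 * ⌊M⌋ + 1 by ring]
        exact_mod_cast Int.toNat_of_nonneg (by omega)
    _ ≤ 2 * M + 1 := by linarith [Int.floor_le M]

theorem finite_and_ncard_le_of_injOn {X : Type*} {S : Set X} {f : X → ℤ} (hf : InjOn f S)
    {M : ℝ} (hM : 0 ≤ M) (h : ∀ a ∈ S, ∀ b ∈ S, |(f a : ℝ) - f b| ≤ M) :
    S.Finite ∧ (S.ncard : ℝ) ≤ 2 * M + 1 := by
  obtain ⟨hfin, hcard⟩ := finite_and_ncard_le_of_abs_sub_le (S := f '' S) hM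
    (by rintro _ ⟨a, ha, rfl⟩ _ ⟨b, hb, rfl⟩; exact h a ha b hb)
  exact ⟨hfin.of_finite_image hf, by rwa [hf.ncard_image] at hcard⟩

theorem finite_and_ncard_le_mul_of_fibers {X Y : Type*} {S : Set X} (f : X → Y) {A B : ℝ}
    (hB : 0 ≤ B) (himg : (f '' S).Finite ∧ ((f '' S).ncard : ℝ) ≤ A)
    (hfib : ∀ y ∈ f '' S, (S ∩ f ⁻¹' {y}).Finite ∧ ((S ∩ f ⁻¹' {y}).ncard : ℝ) ≤ B) :
    S.Finite ∧ (S.ncard : ℝ) ≤ A * B := by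
  set t := himg.1.toFinset
  have hcover : S ⊆ ⋃ y ∈ t, S ∩ f ⁻¹' {y} := fun x hx ↦
    mem_biUnion (himg.1.mem_toFinset.2 (mem_image_of_mem f hx)) ⟨hx, rfl⟩
  have hfin : (⋃ y ∈ t, S ∩ f ⁻¹' {y}).Finite :=
    t.finite_toSet.biUnion fun y hy ↦ (hfib y (himg.1.mem_toFinset.1 hy)).1
  refine ⟨hfin.subset hcover, ?_⟩
  calc (S.ncard : ℝ) ≤ ∑ y ∈ t, ((S ∩ f ⁻¹' {y}).ncard : ℝ) := by
        exact_mod_cast (ncard_le_ncard hcover hfin).trans (t.set_ncard_biUnion_le _)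
    _ ≤ ∑ _y ∈ t, B := Finset.sum_le_sum fun y hy ↦ (hfib y (himg.1.mem_toFinset.1 hy)).2
    _ = t.card * B := by rw [Finset.sum_const, nsmul_eq_mul]
    _ ≤ A * B := by
        refine mul_le_mul_of_nonneg_right ?_ hB
        rw [← ncard_eq_toFinset_card _ himg.1]
        exact himg.2

open ComplexConjugate

lemma Int.eq_mul_of_mul_sub_mul_eq_zero {a b c d n₁ n₂ : ℤ} (hcd : c * a + d * b = 1)
    (h : a * n₂ - b * n₁ = 0) : n₁ = (c * n₁ + d * n₂) * a ∧ n₂ = (c * n₁ + d * n₂) * b :=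
  ⟨by linear_combination (-n₁) * hcd - d * h, by linear_combination (-n₂) * hcd + c * h⟩

section Lattice

variable (u w : ℂ)

def latticePoint (m : ℤ × ℤ) : ℂ := m.1 * u + m.2 * w

lemma im_conj_latticePoint_mul (k m : ℤ × ℤ) :
    (conj (latticePoint u w k) * latticePoint u w m).im =
      ((k.1 * m.2 - k.2 * m.1 : ℤ) : ℝ) * (conj u * w).im := by
  simp only [latticePoint, map_add, map_mul, map_intCast, Complex.mul_im,
    Complex.add_im, Complex.add_re, Complex.mul_re, Complex.intCast_re, Complex.intCast_im,
    Complex.conj_re, Complex.conj_im]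
  push_cast
  ring

lemma latticePoint_sub (m m' : ℤ × ℤ) :
    latticePoint u w m - latticePoint u w m' = latticePoint u w (m - m') := by
  simp only [latticePoint, Prod.fst_sub, Prod.snd_sub]
  push_cast
  ring

lemma latticePoint_smul (t : ℤ) (m : ℤ × ℤ) :
    latticePoint u w (t • m) = t * latticePoint u w m := by
  simp only [latticePoint, Prod.smul_fst, Prod.smul_snd, smul_eq_mul]
  push_cast
  ring

variable {u w}

theorem finite_and_ncard_latticeBall_le_of_isCoprime {k : ℤ × ℤ} (hk : IsCoprime k.1 k.2)
    (hv : 0 < ‖latticePoint u w k‖) (hV : 0 < |(conj u * w).im|) {R : ℝ} (hR : 0 ≤ R) :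
    {m | ‖latticePoint u w m‖ ≤ R}.Finite ∧ ({m | ‖latticePoint u w m‖ ≤ R}.ncard : ℝ) ≤
      (4 * (‖latticePoint u w k‖ * R / |(conj u * w).im|) + 1) *
        (4 * (R / ‖latticePoint u w k‖) + 1) := by
  set v := latticePoint u w k
  set V := |(conj u * w).im|
  obtain ⟨c, d, hcd⟩ := hk
  -- the fibres of `cross` are the lattice lines parallel to `v`, parametrised by `φ`
  set cross : ℤ × ℤ → ℤ := fun m ↦ k.1 * m.2 - k.2 * m.1
  set φ : ℤ × ℤ → ℤ := fun m ↦ c * m.1 + d * m.2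
  have hline : ∀ m m', cross m = cross m' → m - m' = (φ m - φ m') • k := by
    intro m m' h
    obtain ⟨h₁, h₂⟩ := Int.eq_mul_of_mul_sub_mul_eq_zero (n₁ := m.1 - m'.1)
      (n₂ := m.2 - m'.2) hcd (by simp only [cross] at h; linear_combination h)
    ext
    · simp only [Prod.fst_sub, Prod.smul_fst, smul_eq_mul, φ]; linear_combination h₁
    · simp only [Prod.snd_sub, Prod.smul_snd, smul_eq_mul, φ]; linear_combination h₂
  have hcross : ∀ m, ‖latticePoint u w m‖ ≤ R → |(cross m : ℝ)| ≤ ‖v‖ * R / V := by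
    intro m hm
    rw [le_div_iff₀ hV]
    calc |(cross m : ℝ)| * V = |(conj v * latticePoint u w m).im| := by
          rw [im_conj_latticePoint_mul, abs_mul]
      _ ≤ ‖conj v * latticePoint u w m‖ := Complex.abs_im_le_norm _
      _ ≤ ‖v‖ * R := by rw [norm_mul, Complex.norm_conj]; gcongr
  refine finite_and_ncard_le_mul_of_fibers cross (by positivity) ?_ fun b _ ↦ ?_
  · refine (finite_and_ncard_le_of_abs_sub_le (M := 2 * (‖v‖ * R / V)) (by positivity)
      ?_).imp_right (le_of_le_of_eq · (by ring))
    rintro _ ⟨m, hm, rfl⟩ _ ⟨m', hm', rfl⟩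
    calc |(cross m : ℝ) - cross m'| ≤ |(cross m : ℝ)| + |(cross m' : ℝ)| := abs_sub _ _
      _ ≤ 2 * (‖v‖ * R / V) := by linarith [hcross m hm, hcross m' hm']
  · have hfib : ∀ m ∈ {m | ‖latticePoint u w m‖ ≤ R} ∩ cross ⁻¹' {b},
        ∀ m' ∈ {m | ‖latticePoint u w m‖ ≤ R} ∩ cross ⁻¹' {b}, m - m' = (φ m - φ m') • k :=
      fun m hm m' hm' ↦ hline m m' ((mem_preimage.1 hm.2).trans (mem_preimage.1 hm'.2).symm)
    refine (finite_and_ncard_le_of_injOn (f := φ) (M := 2 * (R / ‖v‖))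
      (fun m hm m' hm' h ↦ ?_) (by positivity) fun m hm m' hm' ↦ ?_).imp_right
      (le_of_le_of_eq · (by ring))
    · simpa [h, sub_eq_zero] using hfib m hm m' hm'
    · rw [← mul_div_assoc, le_div_iff₀ hv]
      calc |(φ m : ℝ) - φ m'| * ‖v‖ = ‖latticePoint u w m - latticePoint u w m'‖ := by
            rw [latticePoint_sub, hfib m hm m' hm', latticePoint_smul, norm_mul,
              Complex.norm_intCast, Int.cast_sub]
        _ ≤ ‖latticePoint u w m‖ + ‖latticePoint u w m'‖ := norm_sub_le _ _
        _ ≤ 2 * R := by linarith [hm.1.out, hm'.1.out]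

theorem finite_and_ncard_latticeBall_le {r R : ℝ} (hr : 0 < r) (hR : 0 ≤ R)
    (hV : 0 < |(conj u * w).im|) (hmin : ∀ m ≠ 0, r ≤ ‖latticePoint u w m‖) :
    {m | ‖latticePoint u w m‖ ≤ R}.Finite ∧ ({m | ‖latticePoint u w m‖ ≤ R}.ncard : ℝ) ≤
      1 + 4 * (R / r) + 20 * (R ^ 2 / |(conj u * w).im|) := by
  by_cases hex : ∃ m ≠ 0, ‖latticePoint u w m‖ ≤ R
  · obtain ⟨m, hm0, hmR⟩ := hex
    have hgcd : 0 < Int.gcd m.1 m.2 :=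
      Int.gcd_pos_iff.2 (by contrapose! hm0; exact Prod.ext hm0.1 hm0.2)
    obtain ⟨n, k₁, k₂, hn, hk, h₁, h₂⟩ := Int.exists_gcd_one' hgcd
    have hmk : m = (n : ℤ) • (k₁, k₂) :=
      Prod.ext (by simp [h₁, mul_comm]) (by simp [h₂, mul_comm])
    have hk0 : (k₁, k₂) ≠ 0 := by rintro hk0; simp [hmk, hk0] at hm0
    set v := latticePoint u w (k₁, k₂)
    have hvr : r ≤ ‖v‖ := hmin _ hk0
    have hv : 0 < ‖v‖ := hr.trans_le hvr
    have hvR : ‖v‖ ≤ R := by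
      have hn1 : (1 : ℝ) ≤ n := by exact_mod_cast hn
      rw [hmk, latticePoint_smul, norm_mul, Complex.norm_intCast, Int.cast_natCast,
        abs_of_pos (by positivity)] at hmR
      nlinarith
    refine (finite_and_ncard_latticeBall_le_of_isCoprime
      (Int.isCoprime_iff_gcd_eq_one.2 hk) hv hV hR).imp_right (le_trans · ?_)
    have h₁ : ‖v‖ * R / |(conj u * w).im| ≤ R ^ 2 / |(conj u * w).im| := by
      rw [sq]; gcongr
    have h₂ : R / ‖v‖ ≤ R / r := by gcongr
    calc (4 * (‖v‖ * R / |(conj u * w).im|) + 1) * (4 * (R / ‖v‖) + 1)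
        = 1 + 4 * (R / ‖v‖) + 16 * (R ^ 2 / |(conj u * w).im|)
          + 4 * (‖v‖ * R / |(conj u * w).im|) := by field_simp; ring
      _ ≤ 1 + 4 * (R / r) + 20 * (R ^ 2 / |(conj u * w).im|) := by linarith
  · push Not at hex
    have hsub : {m | ‖latticePoint u w m‖ ≤ R} ⊆ {0} := fun m hm ↦
      by_contra fun hm0 ↦ (hex m hm0).not_ge hm
    refine ⟨(finite_singleton 0).subset hsub, ?_⟩
    have : ({m | ‖latticePoint u w m‖ ≤ R}.ncard : ℝ) ≤ 1 := by
      exact_mod_cast (ncard_le_ncard hsub).trans (ncard_singleton (0 : ℤ × ℤ)).le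
    have : 0 ≤ 4 * (R / r) + 20 * (R ^ 2 / |(conj u * w).im|) := by positivity
    linarith

end Lattice

lemma moebius_im (m : M2) (z : ℂ) :
    (moebius m z).im = m.det * z.im / Complex.normSq (m 1 0 * z + m 1 1) := by
  rw [moebius, Complex.div_im, det_fin_two, ← sub_div]
  congr 1
  simp only [Complex.add_re, Complex.add_im, Complex.mul_re, Complex.mul_im, Complex.ofReal_re,
    Complex.ofReal_im]
  ring

lemma Squarefree.exists_dvd_isCoprime_dvd_mul {N : ℕ} (hN : Squarefree N) (C : ℤ) :
    ∃ Q : ℕ, Q ∣ N ∧ IsCoprime (Q : ℤ) C ∧ (N : ℤ) ∣ Q * C := by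
  set Q₁ := N.gcd C.natAbs
  have hQN : N / Q₁ ∣ N := Nat.div_dvd_of_dvd (N.gcd_dvd_left _)
  have hNQ : N / Q₁ * Q₁ = N := Nat.div_mul_cancel (N.gcd_dvd_left _)
  have hcop : (N / Q₁).Coprime Q₁ := Nat.coprime_of_squarefree_mul (by rwa [hNQ])
  refine ⟨N / Q₁, hQN, Int.isCoprime_iff_gcd_eq_one.2 ?_, ?_⟩
  · have : (N / Q₁).gcd C.natAbs ∣ (N / Q₁).gcd Q₁ :=
      Nat.dvd_gcd (Nat.gcd_dvd_left _ _)
        (Nat.dvd_gcd ((Nat.gcd_dvd_left _ _).trans hQN) (Nat.gcd_dvd_right _ _))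
    rw [hcop.gcd_eq_one] at this
    exact Nat.dvd_one.1 this
  · rw [show (N : ℤ) = (N / Q₁ : ℕ) * Q₁ by exact_mod_cast hNQ.symm]
    exact mul_dvd_mul_left _ (Int.ofNat_dvd_left.2 (N.gcd_dvd_right _))

lemma exists_mem_atkinLehner_bottom_row {N : ℕ} (hN : Squarefree N) {C D : ℤ}
    (hCD : IsCoprime C D) : ∃ Q : ℕ, Q ∣ N ∧ IsCoprime (Q : ℤ) C ∧
      ∃ σ ∈ AtkinLehner N, σ 1 0 = √Q * C ∧ σ 1 1 = √Q * D := by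
  obtain ⟨Q, hQN, hQC, c, hc⟩ := hN.exists_dvd_isCoprime_dvd_mul C
  obtain ⟨u, v, huv⟩ := hQC.mul_left hCD.symm
  have hQ : 0 < Q := Nat.pos_of_dvd_of_pos hQN (Nat.pos_of_ne_zero hN.ne_zero)
  have hQR : (0 : ℝ) < Q := by exact_mod_cast hQ
  have hcR : (N : ℝ) * c = Q * C := by exact_mod_cast hc.symm
  have hsq : √(Q : ℝ) ^ 2 = Q := Real.sq_sqrt hQR.le
  have hsq0 : √(Q : ℝ) ≠ 0 := (Real.sqrt_pos.2 hQR).ne'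
  refine ⟨Q, hQN, hQC, (√Q)⁻¹ • !![(Q : ℝ) * u, ((-v : ℤ) : ℝ); (N : ℝ) * c, (Q : ℝ) * D],
    ⟨?_, Q, u, -v, c, D, hQ, hQN, rfl⟩, ?_, ?_⟩
  · have huvR : (u : ℝ) * (Q * D) + v * C = 1 := by exact_mod_cast huv
    rw [det_smul, det_fin_two_of, Fintype.card_fin, hcR, inv_pow, hsq]
    calc (Q : ℝ)⁻¹ * (Q * u * (Q * D) - ((-v : ℤ) : ℝ) * (Q * C))
        = (Q : ℝ)⁻¹ * Q * (u * (Q * D) + v * C) := by push_cast; ring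
      _ = 1 := by rw [huvR, inv_mul_cancel₀ hQR.ne', one_mul]
  · simp only [Matrix.smul_apply, of_apply, cons_val', cons_val_zero, cons_val_fin_one,
      cons_val_one, smul_eq_mul, hcR]
    field_simp
    rw [hsq]
  · simp only [Matrix.smul_apply, of_apply, cons_val', cons_val_one, cons_val_fin_one,
      smul_eq_mul]
    field_simp
    rw [hsq]

lemma exists_dvd_isCoprime_one_le_mul_normSq {N : ℕ} (hN : Squarefree N) {z : ℂ}
    (hz : 0 < z.im) (hmax : ∀ σ ∈ AtkinLehner N, (moebius σ z).im ≤ z.im) {C D : ℤ}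
    (hCD : IsCoprime C D) :
    ∃ Q : ℕ, Q ∣ N ∧ IsCoprime (Q : ℤ) C ∧ 1 ≤ Q * Complex.normSq (C * z + D) := by
  obtain ⟨Q, hQN, hQC, σ, hσ, h10, h11⟩ := exists_mem_atkinLehner_bottom_row hN hCD
  refine ⟨Q, hQN, hQC, ?_⟩
  have hQ : (0 : ℝ) < Q := by
    exact_mod_cast Nat.pos_of_dvd_of_pos hQN (Nat.pos_of_ne_zero hN.ne_zero)
  have hne : (C : ℂ) * z + D ≠ 0 := by
    intro h0
    have hC : C = 0 := by
      have := congrArg Complex.im h0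
      simp only [Complex.add_im, Complex.mul_im, Complex.intCast_re, Complex.intCast_im,
        zero_mul, add_zero, Complex.zero_im, mul_eq_zero, hz.ne', or_false] at this
      exact_mod_cast this
    have hD : D = 0 := by simpa [hC] using h0
    exact not_isCoprime_zero_zero (hC ▸ hD ▸ hCD)
  have hden :
      Complex.normSq (↑(√Q * C) * z + ↑(√Q * D)) = Q * Complex.normSq (C * z + D) := by
    rw [show (↑(√Q * C) * z + ↑(√Q * D) : ℂ) = (√Q : ℝ) * (C * z + D) by push_cast; ring,
      Complex.normSq_mul, Complex.normSq_ofReal, Real.mul_self_sqrt hQ.le]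
  have him := hmax σ hσ
  rw [moebius_im, hσ.1, h10, h11, hden, one_mul,
    div_le_iff₀ (mul_pos hQ (Complex.normSq_pos.2 hne))] at him
  exact (le_mul_iff_one_le_right hz).1 him

theorem inv_sqrt_le_norm_latticePoint {N ℓ : ℕ} (hN : Squarefree N) (hℓ : 0 < ℓ) (hℓN : ℓ ∣ N)
    {z : ℂ} (hz : 0 < z.im) (hmax : ∀ σ ∈ AtkinLehner N, (moebius σ z).im ≤ z.im)
    {m : ℤ × ℤ} (hm : m ≠ 0) : (√ℓ)⁻¹ ≤ ‖latticePoint ((N / ℓ : ℝ) * z) 1 m‖ := by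
  obtain ⟨k, a⟩ := m
  have hN0 : (N : ℤ) ≠ 0 := by exact_mod_cast hN.ne_zero
  have hgcd : 0 < Int.gcd (N * k) (ℓ * a) := Int.gcd_pos_iff.2 <| by
    contrapose! hm
    simp_all [hℓ.ne']
  obtain ⟨C, D, hCD, hC, hD⟩ := Int.exists_gcd_one hgcd
  set h := Int.gcd (N * k) (ℓ * a)
  obtain ⟨Q, hQN, hQC, hQ⟩ :=
    exists_dvd_isCoprime_one_le_mul_normSq hN hz hmax (Int.isCoprime_iff_gcd_eq_one.2 hCD)
  have hQh : Q ∣ h := Int.natCast_dvd_natCast.1 <| hQC.dvd_of_dvd_mul_left <|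
    hC ▸ dvd_mul_of_dvd_left (Int.natCast_dvd_natCast.2 hQN) k
  have hℓh : ℓ ∣ h := Int.natCast_dvd_natCast.1 <| Int.dvd_coe_gcd
    (dvd_mul_of_dvd_left (Int.natCast_dvd_natCast.2 hℓN) k) (dvd_mul_right _ _)
  have hℓQ : (ℓ : ℝ) * Q ≤ h ^ 2 := by
    rw [sq]; exact_mod_cast Nat.mul_le_mul (Nat.le_of_dvd hgcd hℓh) (Nat.le_of_dvd hgcd hQh)
  have hpt : latticePoint ((N / ℓ : ℝ) * z) 1 (k, a) = (h / ℓ : ℝ) * (C * z + D) := by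
    have hCℂ : (N : ℂ) * k = C * h := by exact_mod_cast hC
    have hDℂ : (ℓ : ℂ) * a = D * h := by exact_mod_cast hD
    have hℓℂ : (ℓ : ℂ) ≠ 0 := by exact_mod_cast hℓ.ne'
    simp only [latticePoint]
    push_cast
    field_simp
    linear_combination z * hCℂ + hDℂ
  have hℓR : (0 : ℝ) < ℓ := by exact_mod_cast hℓ
  have hQR : (0 : ℝ) < Q := by
    exact_mod_cast Nat.pos_of_dvd_of_pos hQN (Nat.pos_of_ne_zero hN.ne_zero)
  rw [Complex.norm_def, hpt, Complex.normSq_mul, Complex.normSq_ofReal, ← Real.sqrt_inv]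
  refine Real.sqrt_le_sqrt ?_
  calc (ℓ : ℝ)⁻¹ ≤ (h / ℓ : ℝ) * (h / ℓ) / Q := by
        rw [div_mul_div_comm, div_div, le_div_iff₀ (by positivity)]
        calc (ℓ : ℝ)⁻¹ * (ℓ * ℓ * Q) = ℓ * Q := by field_simp
          _ ≤ h * h := by rwa [← sq]
    _ ≤ (h / ℓ : ℝ) * (h / ℓ) * Complex.normSq (C * z + D) := by
        rw [div_le_iff₀ hQR, mul_assoc]
        exact le_mul_of_one_le_right (by positivity) (by rwa [mul_comm])

theorem finite_and_ncard_latticeBall_le_of_forall_im_le {N ℓ : ℕ} (hN : Squarefree N)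
    (hℓ : 0 < ℓ) (hℓN : ℓ ∣ N) {x y : ℝ} (hy : 0 < y)
    (hmax : ∀ σ ∈ AtkinLehner N, (moebius σ (x + y * Complex.I)).im ≤ y) {R : ℝ} (hR : 0 ≤ R) :
    {m | ‖latticePoint ((N / ℓ : ℝ) * (x + y * Complex.I)) 1 m‖ ≤ R}.Finite ∧
      ({m | ‖latticePoint ((N / ℓ : ℝ) * (x + y * Complex.I)) 1 m‖ ≤ R}.ncard : ℝ) ≤
        1 + 4 * √ℓ * R + 20 * ℓ * R ^ 2 / (N * y) := by
  have hz : (x + y * Complex.I).im = y := by simp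
  have hℓR : (0 : ℝ) < ℓ := by exact_mod_cast hℓ
  have hNR : (0 : ℝ) < N := by exact_mod_cast Nat.pos_of_ne_zero hN.ne_zero
  have hV : |(conj ((N / ℓ : ℝ) * (x + y * Complex.I)) * 1).im| = N / ℓ * y := by
    simp only [mul_one, map_mul, Complex.conj_ofReal, Complex.mul_im, Complex.ofReal_re,
      Complex.ofReal_im, Complex.conj_re, Complex.conj_im, hz, zero_mul, add_zero]
    rw [mul_neg, abs_neg, abs_of_pos (by positivity)]
  refine (finite_and_ncard_latticeBall_le (inv_pos.2 (Real.sqrt_pos.2 hℓR)) hR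
    (by rw [hV]; positivity) fun m hm ↦ inv_sqrt_le_norm_latticePoint hN hℓ hℓN (hz.symm ▸ hy)
      (hz.symm ▸ hmax) hm).imp_right (le_of_le_of_eq · ?_)
  rw [hV]
  field_simp

lemma Pfun_add_det_of_trace_eq_zero {γ : M2} (h : γ.trace = 0) :
    Pfun γ + γ.det = (γ 0 1 - γ 1 0) ^ 2 / 2 := by
  rw [trace_fin_two] at h
  rw [Pfun, det_fin_two, show γ 1 1 = -γ 0 0 by linarith]
  ring

lemma abs_sub_le_of_mem_PsiSet {γ : M2} {δ L : ℝ} (hδ : 0 ≤ δ) (hL : 0 ≤ L)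
    (h : γ.trace = 0) (hγ : γ ∈ PsiSet δ L) : |γ 0 1 - γ 1 0| ≤ 2 * √δ * L := by
  refine abs_le_of_sq_le_sq ?_ (by positivity)
  have := hγ.2
  rw [Pfun_add_det_of_trace_eq_zero h] at this
  rw [mul_pow, mul_pow, Real.sq_sqrt hδ]
  linarith

def tracelessLatticeMatrix (N ℓ : ℕ) (t : ℤ × ℤ × ℤ) : M2 :=
  !![(t.2.1 : ℝ), t.2.2 / ℓ; t.1 * N / ℓ, -t.2.1]

lemma exists_eq_conj_tracelessLatticeMatrix {N ℓ : ℕ} {g γ : M2} (hg : IsUnit g.det)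
    (hγ : γ ∈ Rconj N ℓ g) (htr : γ.trace = 0) :
    ∃ t, γ = g⁻¹ * tracelessLatticeMatrix N ℓ t * g := by
  obtain ⟨⟨a, ha⟩, ⟨b, hb⟩, ⟨k, hk⟩, ⟨d, hd⟩⟩ := hγ
  have hconj : g⁻¹ * (g * γ * g⁻¹) * g = γ := by
    rw [mul_assoc, nonsing_inv_mul_cancel_right _ _ hg, ← mul_assoc, nonsing_inv_mul _ hg,
      one_mul]
  have htr' : (g * γ * g⁻¹).trace = 0 := by
    rw [trace_mul_cycle, nonsing_inv_mul _ hg, one_mul, htr]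
  refine ⟨(k, a, b), ?_⟩
  rw [← hconj, tracelessLatticeMatrix, eta_fin_two (g * γ * g⁻¹), ha, hb, hk,
    show (g * γ * g⁻¹) 1 1 = -a by rw [trace_fin_two, ha] at htr'; linarith]

section UpperTriangular

variable {N ℓ : ℕ} {x y δ L : ℝ} {g : M2}

lemma isUnit_det_of_eq_upperTriangular (hy : 0 < y)
    (hg : g = !![√y, x / √y; 0, (√y)⁻¹]) : IsUnit g.det := by
  have : √y ≠ 0 := (Real.sqrt_pos.2 hy).ne'
  simp [hg, det_fin_two_of, this]

lemma conj_tracelessLatticeMatrix (hy : 0 < y) (hg : g = !![√y, x / √y; 0, (√y)⁻¹])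
    (t : ℤ × ℤ × ℤ) :
    g⁻¹ * tracelessLatticeMatrix N ℓ t * g =
      !![t.2.1 - t.1 * N / ℓ * x, (2 * t.2.1 * x + t.2.2 / ℓ - t.1 * N / ℓ * x ^ 2) / y;
        t.1 * N / ℓ * y, t.1 * N / ℓ * x - t.2.1] := by
  have hs : √y ≠ 0 := (Real.sqrt_pos.2 hy).ne'
  have hinv : g⁻¹ = !![(√y)⁻¹, -(x / √y); 0, √y] := by
    refine inv_eq_right_inv ?_
    rw [hg, mul_fin_two, one_fin_two]
    simp [hs, mul_div_cancel₀]
  rw [hinv, hg, tracelessLatticeMatrix, show y = √y ^ 2 from (Real.sq_sqrt hy.le).symm,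
    mul_fin_two, mul_fin_two]
  ext i j
  fin_cases i <;> fin_cases j <;> simp <;> field_simp <;> ring

lemma norm_latticePoint_le_of_conj_mem_PsiSet (hy : 0 < y)
    (hg : g = !![√y, x / √y; 0, (√y)⁻¹]) (hL : 0 ≤ L) {t : ℤ × ℤ × ℤ}
    (ht : g⁻¹ * tracelessLatticeMatrix N ℓ t * g ∈ PsiSet δ L) :
    ‖latticePoint ((N / ℓ : ℝ) * (x + y * Complex.I)) 1 (t.1, -t.2.1)‖ ≤ √2 * L := by
  have hP := ht.1
  rw [conj_tracelessLatticeMatrix hy hg, Pfun] at hP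
  simp only [of_apply, cons_val', cons_val_zero, cons_val_one, cons_val_fin_one] at hP
  rw [Complex.norm_def, ← Real.sqrt_sq hL, ← Real.sqrt_mul zero_le_two]
  refine Real.sqrt_le_sqrt ?_
  have hnorm :
      Complex.normSq (latticePoint ((N / ℓ : ℝ) * (x + y * Complex.I)) 1 (t.1, -t.2.1)) =
        (t.2.1 - t.1 * N / ℓ * x) ^ 2 + (t.1 * N / ℓ * y) ^ 2 := by
    simp [latticePoint, Complex.normSq_apply]
    ring
  rw [hnorm]
  nlinarith [sq_nonneg ((2 * t.2.1 * x + t.2.2 / ℓ - t.1 * N / ℓ * x ^ 2) / y)]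

lemma abs_sub_le_of_conj_mem_PsiSet (hℓ : 0 < ℓ) (hy : 0 < y)
    (hg : g = !![√y, x / √y; 0, (√y)⁻¹]) (hδ : 0 ≤ δ) (hL : 0 ≤ L) {k a b b' : ℤ}
    (ht : g⁻¹ * tracelessLatticeMatrix N ℓ (k, a, b) * g ∈ PsiSet δ L)
    (ht' : g⁻¹ * tracelessLatticeMatrix N ℓ (k, a, b') * g ∈ PsiSet δ L) :
    |(b : ℝ) - b'| ≤ 4 * ℓ * y * √δ * L := by
  have bound := fun b (ht : g⁻¹ * tracelessLatticeMatrix N ℓ (k, a, b) * g ∈ PsiSet δ L) ↦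
    abs_sub_le_of_mem_PsiSet hδ hL
      (by simp [conj_tracelessLatticeMatrix hy hg, trace_fin_two]) ht
  have h₁ := bound b ht
  have h₂ := bound b' ht'
  simp only [conj_tracelessLatticeMatrix hy hg, of_apply, cons_val', cons_val_zero,
    cons_val_one, cons_val_fin_one] at h₁ h₂
  have hℓR : (0 : ℝ) < ℓ := by exact_mod_cast hℓ
  calc |(b : ℝ) - b'| = |ℓ * y * (((2 * a * x + b / ℓ - k * N / ℓ * x ^ 2) / y - k * N / ℓ * y)
        - ((2 * a * x + b' / ℓ - k * N / ℓ * x ^ 2) / y - k * N / ℓ * y))| := by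
        congr 1
        field_simp
        ring
    _ = ℓ * y * |((2 * a * x + b / ℓ - k * N / ℓ * x ^ 2) / y - k * N / ℓ * y)
        - ((2 * a * x + b' / ℓ - k * N / ℓ * x ^ 2) / y - k * N / ℓ * y)| := by
        rw [abs_mul, abs_of_pos (mul_pos hℓR hy)]
    _ ≤ ℓ * y * (2 * √δ * L + 2 * √δ * L) := by
        gcongr
        exact (abs_sub _ _).trans (add_le_add h₁ h₂)
    _ = 4 * ℓ * y * √δ * L := by ring

theorem finite_and_ncard_conj_mem_PsiSet_le (hN : Squarefree N) (hℓ : 0 < ℓ) (hℓN : ℓ ∣ N)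
    (hδ : 0 ≤ δ) (hL : 0 ≤ L) (hy : 0 < y)
    (hmax : ∀ σ ∈ AtkinLehner N, (moebius σ (x + y * Complex.I)).im ≤ y)
    (hg : g = !![√y, x / √y; 0, (√y)⁻¹]) :
    {t | g⁻¹ * tracelessLatticeMatrix N ℓ t * g ∈ PsiSet δ L}.Finite ∧
      ({t | g⁻¹ * tracelessLatticeMatrix N ℓ t * g ∈ PsiSet δ L}.ncard : ℝ) ≤
        (1 + 4 * √ℓ * (√2 * L) + 20 * ℓ * (√2 * L) ^ 2 / (N * y)) *
          (2 * (4 * ℓ * y * √δ * L) + 1) := by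
  refine finite_and_ncard_le_mul_of_fibers (fun t : ℤ × ℤ × ℤ ↦ (t.1, -t.2.1)) (by positivity)
    ?_ fun m _ ↦ ?_
  · obtain ⟨hfin, hcard⟩ :=
      finite_and_ncard_latticeBall_le_of_forall_im_le hN hℓ hℓN hy hmax (R := √2 * L)
        (by positivity)
    have hsub : (fun t : ℤ × ℤ × ℤ ↦ (t.1, -t.2.1)) ''
        {t | g⁻¹ * tracelessLatticeMatrix N ℓ t * g ∈ PsiSet δ L} ⊆
        {m | ‖latticePoint ((N / ℓ : ℝ) * (x + y * Complex.I)) 1 m‖ ≤ √2 * L} := by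
      rintro _ ⟨t, ht, rfl⟩
      exact norm_latticePoint_le_of_conj_mem_PsiSet hy hg hL ht
    exact ⟨hfin.subset hsub, le_trans (by exact_mod_cast ncard_le_ncard hsub hfin) hcard⟩
  · have hfib : ∀ t ∈ {t | g⁻¹ * tracelessLatticeMatrix N ℓ t * g ∈ PsiSet δ L} ∩
        (fun t : ℤ × ℤ × ℤ ↦ (t.1, -t.2.1)) ⁻¹' {m}, t.1 = m.1 ∧ t.2.1 = -m.2 := by
      rintro t ⟨-, rfl⟩
      simp
    refine finite_and_ncard_le_of_injOn (f := fun t ↦ t.2.2) ?_ (by positivity) ?_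
    · rintro ⟨k, a, b⟩ ht ⟨k', a', b'⟩ ht' (rfl : b = b')
      obtain ⟨rfl, rfl⟩ := hfib _ ht
      obtain ⟨rfl, rfl⟩ := hfib _ ht'
      rfl
    · rintro ⟨k, a, b⟩ ht ⟨k', a', b'⟩ ht'
      obtain ⟨rfl, rfl⟩ := hfib _ ht
      obtain ⟨rfl, rfl⟩ := hfib _ ht'
      exact abs_sub_le_of_conj_mem_PsiSet hℓ hy hg hδ hL ht.1 ht'.1

end UpperTriangular

/-- First count of R(ℓ;g)⁰ ∩ Ψ(δ,L) for g upper-triangular corresponding to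
    z = x + iy with maximal imaginary part under A₀(N). -/
theorem stmt5 : ∃ C : ℝ, 0 < C ∧
    ∀ (N ℓ : ℕ) (δ L x y : ℝ), Squarefree N → 0 < N → 0 < ℓ → ℓ ∣ N →
    0 < δ → δ ≤ 1 → 0 < L → 0 < y →
    (∀ σ ∈ AtkinLehner N, (moebius σ (x + y * Complex.I)).im ≤ y) →
    ∀ g : M2, g = !![Real.sqrt y, x / Real.sqrt y; 0, (Real.sqrt y)⁻¹] →
    {γ : M2 | γ ∈ Rconj N ℓ g ∧ γ.trace = 0 ∧ γ ∈ PsiSet δ L}.Finite ∧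
    (({γ : M2 | γ ∈ Rconj N ℓ g ∧ γ.trace = 0 ∧ γ ∈ PsiSet δ L}.ncard : ℝ) ≤
      C * (1 + Real.sqrt ℓ * L + (ℓ : ℝ) / ((N : ℝ) * y) * L ^ 2) *
        (1 + (ℓ : ℝ) * y * Real.sqrt δ * L)) := by
  refine ⟨320, by norm_num, fun N ℓ δ L x y hN _ hℓ hℓN hδ _ hL hy hmax g hg ↦ ?_⟩
  obtain ⟨hfin, hcard⟩ :=
    finite_and_ncard_conj_mem_PsiSet_le hN hℓ hℓN hδ.le hL.le hy hmax hg
  have hsub : {γ : M2 | γ ∈ Rconj N ℓ g ∧ γ.trace = 0 ∧ γ ∈ PsiSet δ L} ⊆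
      (fun t ↦ g⁻¹ * tracelessLatticeMatrix N ℓ t * g) ''
        {t | g⁻¹ * tracelessLatticeMatrix N ℓ t * g ∈ PsiSet δ L} := by
    rintro γ ⟨hγ, htr, hψ⟩
    obtain ⟨t, rfl⟩ :=
      exists_eq_conj_tracelessLatticeMatrix (isUnit_det_of_eq_upperTriangular hy hg) hγ htr
    exact ⟨t, hψ, rfl⟩
  refine ⟨(hfin.image _).subset hsub, ?_⟩
  have hsqrt2 : √2 ≤ 10 := by
    rw [Real.sqrt_le_left (by norm_num)]; norm_num
  calc _ ≤ ({t | g⁻¹ * tracelessLatticeMatrix N ℓ t * g ∈ PsiSet δ L}.ncard : ℝ) := by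
        exact_mod_cast (ncard_le_ncard hsub (hfin.image _)).trans (ncard_image_le hfin)
    _ ≤ (1 + 4 * √ℓ * (√2 * L) + 20 * ℓ * (√2 * L) ^ 2 / (N * y)) *
          (2 * (4 * ℓ * y * √δ * L) + 1) := hcard
    _ ≤ (40 * (1 + √ℓ * L + ℓ / (N * y) * L ^ 2)) * (8 * (1 + ℓ * y * √δ * L)) := by
        have h₁ : 20 * ℓ * (√2 * L) ^ 2 / (N * y) = 40 * (ℓ / (N * y) * L ^ 2) := by
          rw [mul_pow, Real.sq_sqrt zero_le_two]; ring
        have h₂ : 4 * √ℓ * (√2 * L) ≤ 40 * (√ℓ * L) := by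
          nlinarith [mul_nonneg (Real.sqrt_nonneg ℓ) hL.le]
        have h₃ : 0 ≤ ℓ * y * √δ * L := by positivity
        gcongr <;> linarith
    _ = 320 * (1 + √ℓ * L + ℓ / (N * y) * L ^ 2) * (1 + ℓ * y * √δ * L) := by ring
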